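/- arXiv:1801.03856 — 9 statements merged into one kernel-verified Lean document; each statement's English description precedes it below -/
import Mathlib

section
/- Let A be a finite-dimensional perfect evolution algebra over a field K, let B and B' be natural bases of A, and let i be a natural number. If a nonzero proper ideal I of A is the K-linear span of an i-element subset of B, then I is also the K-linear span of some i-element subset of B'. (In particular, being an i-basic ideal does not depend on the chosen natural basis.) -/
open Submodule

section EvolutionAlgebraDefs

variable {K A : Type*} [Field K] [NonUnitalNonAssocCommRing A] [Module K A]
  [SMulCommClass K A A] [IsScalarTower K A A]

/-- A *natural basis* of an evolution algebra: distinct basis vectors multiply to zero. -/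
def IsNaturalBasis {ι : Type*} (b : Module.Basis ι K A) : Prop :=
  ∀ i j : ι, i ≠ j → b i * b j = 0

/-- An *ideal* of the commutative (not necessarily associative or unital) `K`-algebra `A`:
a `K`-subspace closed under multiplication by arbitrary elements of `A`. -/
def IsEvoIdeal (I : Submodule K A) : Prop :=
  ∀ a : A, ∀ x ∈ I, a * x ∈ I

variable (K A)

/-- `A²`: the `K`-linear span of all products of elements of `A`. -/
def sqSpan : Submodule K A :=
  Submodule.span K {z : A | ∃ x y : A, z = x * y}

/-- `A` is *perfect*: `A² = A`. -/
def IsPerfectEvo : Prop := sqSpan K A = ⊤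

/-- `A` is *simple*: `A² ≠ 0` and the only ideals of `A` are `0` and `A`. -/
def IsSimpleEvo : Prop :=
  sqSpan K A ≠ ⊥ ∧ ∀ I : Submodule K A, IsEvoIdeal I → I = ⊥ ∨ I = ⊤

/-- `A` is *irreducible*: it cannot be decomposed as the direct sum of two nonzero ideals. -/
def IsIrreducibleEvo : Prop :=
  ¬ ∃ I J : Submodule K A, IsEvoIdeal I ∧ IsEvoIdeal J ∧ I ≠ ⊥ ∧ J ≠ ⊥ ∧
    I ⊓ J = ⊥ ∧ I ⊔ J = ⊤

variable {A}

/-- The smallest ideal of `A` containing `x`. -/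
def idealGenerated (x : A) : Submodule K A :=
  sInf {I : Submodule K A | IsEvoIdeal I ∧ x ∈ I}

variable {K}

/-- The structure matrix of a basis: entry `(k, i)` is the coefficient of `e k` in `(e i)²`. -/
noncomputable def structMatrix {n : ℕ} (b : Module.Basis (Fin n) K A) :
    Matrix (Fin n) (Fin n) K :=
  Matrix.of fun k i => b.repr (b i * b i) k

end EvolutionAlgebraDefs

/-- In a finite-dimensional perfect evolution algebra, a nonzero proper
ideal spanned by an `i`-element subset of one natural basis is also spanned by an
`i`-element subset of any other natural basis. -/
theorem basic_ideal_independent_of_natural_basis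
    {K A : Type*} [Field K] [NonUnitalNonAssocCommRing A] [Module K A]
    [SMulCommClass K A A] [IsScalarTower K A A] [FiniteDimensional K A]
    {ι ι' : Type*} (b : Module.Basis ι K A) (hb : IsNaturalBasis b)
    (b' : Module.Basis ι' K A) (hb' : IsNaturalBasis b')
    (hperf : IsPerfectEvo K A)
    (i : ℕ) (I : Submodule K A) (hI : IsEvoIdeal I) (hbot : I ≠ ⊥) (htop : I ≠ ⊤)
    (s : Finset ι) (hcard : s.card = i)
    (hspan : I = Submodule.span K (⇑b '' ↑s)) :
    ∃ s' : Finset ι', s'.card = i ∧ I = Submodule.span K (⇑b' '' ↑s') := by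
  classical
  haveI : Fintype ι := FiniteDimensional.fintypeBasisIndex b
  haveI : Fintype ι' := FiniteDimensional.fintypeBasisIndex b'
  -- product formula in a natural basis
  have hmul : ∀ x y : A, x * y = ∑ j : ι, (b.repr x j * b.repr y j) • (b j * b j) := by
    intro x y
    conv_lhs => rw [← b.sum_repr x, ← b.sum_repr y]
    rw [Finset.sum_mul_sum]
    refine Finset.sum_congr rfl fun j _ => ?_
    rw [Finset.sum_eq_single j]
    · rw [smul_mul_smul_comm]
    · intro m _ hm
      rw [smul_mul_smul_comm, hb j m (fun h => hm h.symm), smul_zero]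
    · intro h; exact absurd (Finset.mem_univ j) h
  set v : ι → A := fun j => b j * b j with hv
  have hspanv : ⊤ ≤ Submodule.span K (Set.range v) := by
    rw [← hperf, sqSpan]
    refine Submodule.span_le.mpr ?_
    rintro z ⟨x, y, rfl⟩
    rw [hmul x y]
    exact Submodule.sum_mem _ fun j _ =>
      Submodule.smul_mem _ _ (Submodule.subset_span ⟨j, rfl⟩)
  have hcardι : Fintype.card ι = Module.finrank K A :=
    (Module.finrank_eq_card_basis b).symm
  have hli : LinearIndependent K v :=
    linearIndependent_of_top_le_span_of_card_eq_finrank hspanv hcardι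
  -- orthogonality relations between the coefficients of b' in b
  have horth : ∀ k l : ι', k ≠ l → ∀ j : ι, b.repr (b' k) j * b.repr (b' l) j = 0 := by
    intro k l hkl
    have h0 : ∑ m : ι, (b.repr (b' k) m * b.repr (b' l) m) • v m = 0 := by
      rw [← hmul, hb' k l hkl]
    exact Fintype.linearIndependent_iff.mp hli _ h0
  have hexists : ∀ k : ι', ∃ j, b.repr (b' k) j ≠ 0 := by
    intro k
    by_contra h
    push_neg at h
    apply b'.ne_zero k
    have h0 : b.repr (b' k) = 0 := Finsupp.ext h
    exact (LinearEquiv.map_eq_zero_iff _).mp h0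
  choose σ hσ using hexists
  have hinj : Function.Injective σ := by
    intro k l h
    by_contra hkl
    refine mul_ne_zero (hσ k) ?_ (horth k l hkl (σ k))
    rw [h]; exact hσ l
  have hcard' : Fintype.card ι' = Fintype.card ι := by
    rw [hcardι, Module.finrank_eq_card_basis b']
  have hbij : Function.Bijective σ :=
    (Fintype.bijective_iff_injective_and_card σ).mpr ⟨hinj, hcard'⟩
  set e : ι' ≃ ι := Equiv.ofBijective σ hbij with he
  have heapp : ∀ k, e k = σ k := fun k => rfl
  have hsingle : ∀ k : ι', ∀ j : ι, j ≠ σ k → b.repr (b' k) j = 0 := by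
    intro k j hj
    obtain ⟨l, rfl⟩ := hbij.2 j
    have hlk : k ≠ l := fun h => hj (by rw [h])
    exact (mul_eq_zero.mp (horth k l hlk (σ l))).resolve_right (hσ l)
  have hform : ∀ k : ι', b' k = b.repr (b' k) (σ k) • b (σ k) := by
    intro k
    apply b.repr.injective
    ext j
    rw [map_smul, b.repr_self, Finsupp.smul_single, smul_eq_mul, mul_one]
    by_cases hj : j = σ k
    · subst hj; simp
    · rw [Finsupp.single_apply, if_neg (fun h => hj h.symm), hsingle k j hj]
  refine ⟨s.image e.symm,
    by rw [Finset.card_image_of_injective _ e.symm.injective, hcard], ?_⟩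
  have hsymm : ∀ j : ι, σ (e.symm j) = j := fun j => by
    rw [← heapp, e.apply_symm_apply]
  rw [hspan]
  apply le_antisymm
  · rw [Submodule.span_le]
    rintro _ ⟨j, hj, rfl⟩
    have hjs : e.symm j ∈ s.image e.symm := Finset.mem_image_of_mem _ hj
    have h1 : b' (e.symm j) = b.repr (b' (e.symm j)) j • b j := by
      have h2 := hform (e.symm j)
      rwa [hsymm j] at h2
    have hc : b.repr (b' (e.symm j)) j ≠ 0 := by
      have h3 := hσ (e.symm j)
      rwa [hsymm j] at h3
    set c := b.repr (b' (e.symm j)) j with hcdef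
    have h4 : b j = c⁻¹ • b' (e.symm j) := by
      rw [h1, smul_smul, inv_mul_cancel₀ hc, one_smul]
    rw [h4]
    exact Submodule.smul_mem _ _ (Submodule.subset_span ⟨e.symm j, hjs, rfl⟩)
  · rw [Submodule.span_le]
    rintro _ ⟨k, hk, rfl⟩
    obtain ⟨j, hj, rfl⟩ := Finset.mem_image.mp hk
    rw [hform (e.symm j), hsymm j]
    exact Submodule.smul_mem _ _ (Submodule.subset_span ⟨j, hj, rfl⟩)
end

section
/- Let A be a nonzero finite-dimensional evolution algebra over a field K with natural basis B = (e_i)_{i∈ι} and structure constants ω_{ki}. Then A is simple if and only if A² = A and the directed graph on ι with an edge from i to j exactly when ω_{ji} ≠ 0 is strongly connected (for any two distinct vertices u, v there is a directed path of length ≥ 1 from u to v). -/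
open Submodule

section Aux

variable {K A ι : Type*} [Field K] [NonUnitalNonAssocCommRing A] [Module K A]
  [SMulCommClass K A A] [IsScalarTower K A A] [Fintype ι]

/-- Multiplication in an evolution algebra, in coordinates. -/
lemma evo_mul_eq_sum (b : Module.Basis ι K A) (hb : IsNaturalBasis b) (x y : A) :
    x * y = ∑ i, (b.repr x i * b.repr y i) • (b i * b i) := by
  conv_lhs => rw [← b.sum_repr x, ← b.sum_repr y]
  rw [Finset.sum_mul_sum]
  refine Finset.sum_congr rfl fun i _ => ?_
  rw [Finset.sum_eq_single i]
  · rw [smul_mul_assoc, mul_smul_comm, smul_smul]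
  · intro j _ hj
    rw [smul_mul_assoc, mul_smul_comm, hb i j (Ne.symm hj), smul_zero, smul_zero]
  · intro h; exact absurd (Finset.mem_univ i) h

lemma evo_basis_mul (b : Module.Basis ι K A) (hb : IsNaturalBasis b) (i : ι) (x : A) :
    b i * x = b.repr x i • (b i * b i) := by
  rw [evo_mul_eq_sum b hb, Finset.sum_eq_single i]
  · rw [Module.Basis.repr_self, Finsupp.single_eq_same, one_mul]
  · intro j _ hj
    rw [Module.Basis.repr_self, Finsupp.single_eq_of_ne' (Ne.symm hj), zero_mul, zero_smul]
  · intro h; exact absurd (Finset.mem_univ i) h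

lemma evo_sqSpan_eq (b : Module.Basis ι K A) (hb : IsNaturalBasis b) :
    sqSpan K A = Submodule.span K (Set.range fun i => b i * b i) := by
  apply le_antisymm
  · rw [sqSpan, Submodule.span_le]
    rintro z ⟨x, y, rfl⟩
    rw [evo_mul_eq_sum b hb x y]
    exact Submodule.sum_mem _ fun i _ =>
      Submodule.smul_mem _ _ (Submodule.subset_span ⟨i, rfl⟩)
  · rw [Submodule.span_le]
    rintro z ⟨i, rfl⟩
    exact Submodule.subset_span ⟨b i, b i, rfl⟩

lemma sqSpan_isEvoIdeal : IsEvoIdeal (sqSpan K A) := by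
  intro a x hx
  induction hx using Submodule.span_induction with
  | mem z hz =>
    obtain ⟨u, v, rfl⟩ := hz
    exact Submodule.subset_span ⟨a, u * v, rfl⟩
  | zero => rw [mul_zero]; exact Submodule.zero_mem _
  | add y z _ _ hy hz => rw [mul_add]; exact Submodule.add_mem _ hy hz
  | smul c z _ hz => rw [mul_smul_comm]; exact Submodule.smul_mem _ _ hz

end Aux

/-- A nonzero finite-dimensional evolution algebra is simple if and only if
`A² = A` and the associated directed graph (edge `i → j` iff the coefficient of `e j` in
`(e i)²` is nonzero) is strongly connected. -/
theorem simple_iff_perfect_and_strongly_connected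
    {K A ι : Type*} [Field K] [NonUnitalNonAssocCommRing A] [Module K A]
    [SMulCommClass K A A] [IsScalarTower K A A] [Nontrivial A] [Fintype ι]
    (b : Module.Basis ι K A) (hb : IsNaturalBasis b) :
    IsSimpleEvo K A ↔
      sqSpan K A = ⊤ ∧
        ∀ u v : ι, u ≠ v →
          Relation.TransGen (fun i j : ι => b.repr (b i * b i) j ≠ 0) u v := by
  constructor
  · rintro ⟨hne, hideal⟩
    have hperf : sqSpan K A = ⊤ := by
      rcases hideal _ sqSpan_isEvoIdeal with h | h
      · exact absurd h hne
      · exact h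
    refine ⟨hperf, fun u v huv => ?_⟩
    -- first, `(b u)² ≠ 0`, else `span {b u}` would be a proper nonzero ideal
    have hu2 : b u * b u ≠ 0 := by
      intro h0
      have hid : IsEvoIdeal (Submodule.span K {b u}) := by
        intro a x hx
        rw [Submodule.mem_span_singleton] at hx
        obtain ⟨c, rfl⟩ := hx
        rw [mul_smul_comm, mul_comm, evo_basis_mul b hb, h0, smul_zero, smul_zero]
        exact Submodule.zero_mem _
      rcases hideal _ hid with h | h
      · exact b.ne_zero u (Submodule.span_singleton_eq_bot.mp h)
      · have hv : b v ∈ Submodule.span K ({b u} : Set A) := h ▸ Submodule.mem_top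
        rw [← Set.image_singleton, b.self_mem_span_image] at hv
        exact huv (Set.mem_singleton_iff.mp hv).symm
    -- the span of basis vectors reachable from `u` is an ideal
    set S : Set ι := {j | Relation.TransGen (fun i j : ι => b.repr (b i * b i) j ≠ 0) u j}
      with hS
    have hsq_mem : ∀ j ∈ S, b j * b j ∈ Submodule.span K (b '' S) := by
      intro j hj
      rw [b.mem_span_image]
      intro k hk
      rw [Finset.mem_coe, Finsupp.mem_support_iff] at hk
      exact hj.tail hk
    have hid : IsEvoIdeal (Submodule.span K (b '' S)) := by
      intro a x hx
      induction hx using Submodule.span_induction with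
      | mem z hz =>
        obtain ⟨j, hj, rfl⟩ := hz
        rw [mul_comm, evo_basis_mul b hb]
        exact Submodule.smul_mem _ _ (hsq_mem j hj)
      | zero => rw [mul_zero]; exact Submodule.zero_mem _
      | add y z _ _ hy hz => rw [mul_add]; exact Submodule.add_mem _ hy hz
      | smul c z _ hz => rw [mul_smul_comm]; exact Submodule.smul_mem _ _ hz
    -- it is nonzero since `(b u)² ≠ 0`
    obtain ⟨k, hk⟩ : ∃ k, b.repr (b u * b u) k ≠ 0 := by
      by_contra h
      push_neg at h
      exact hu2 (b.repr.map_eq_zero_iff.mp (Finsupp.ext h))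
    have hkS : k ∈ S := Relation.TransGen.single hk
    have hne' : Submodule.span K (b '' S) ≠ ⊥ := by
      intro h
      exact b.ne_zero k (Submodule.mem_bot K |>.mp
        (h ▸ Submodule.subset_span ⟨k, hkS, rfl⟩))
    rcases hideal _ hid with h | h
    · exact absurd h hne'
    · have hv : b v ∈ Submodule.span K (b '' S) := h ▸ Submodule.mem_top
      rw [b.self_mem_span_image] at hv
      exact hv
  · rintro ⟨hperf, hconn⟩
    refine ⟨by rw [hperf]; exact top_ne_bot, ?_⟩
    intro I hI
    by_cases hbot : I = ⊥
    · exact Or.inl hbot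
    right
    obtain ⟨x, hxI, hx0⟩ := (Submodule.ne_bot_iff I).mp hbot
    obtain ⟨i, hxi⟩ : ∃ i, b.repr x i ≠ 0 := by
      by_contra h
      push_neg at h
      exact hx0 (b.repr.map_eq_zero_iff.mp (Finsupp.ext h))
    -- `(b i)² ∈ I`
    have hi2 : b i * b i ∈ I := by
      have h1 := hI (b i) x hxI
      rw [evo_basis_mul b hb] at h1
      have h2 := I.smul_mem (b.repr x i)⁻¹ h1
      rwa [inv_smul_smul₀ hxi] at h2
    -- propagate along edges
    have step : ∀ j k : ι, b j * b j ∈ I → b.repr (b j * b j) k ≠ 0 →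
        b k * b k ∈ I := by
      intro j k hj he
      have h1 := hI (b k) _ hj
      rw [evo_basis_mul b hb] at h1
      have h2 := I.smul_mem (b.repr (b j * b j) k)⁻¹ h1
      rwa [inv_smul_smul₀ he] at h2
    have reach : ∀ j : ι,
        Relation.TransGen (fun i j : ι => b.repr (b i * b i) j ≠ 0) i j →
        b j * b j ∈ I := by
      intro j hj
      induction hj with
      | single h => exact step _ _ hi2 h
      | tail _ h ih => exact step _ _ ih h
    have hall : ∀ j : ι, b j * b j ∈ I := by
      intro j
      by_cases hji : j = i
      · rw [hji]; exact hi2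
      · exact reach j (hconn i j (Ne.symm hji))
    have hle : sqSpan K A ≤ I := by
      rw [evo_sqSpan_eq b hb, Submodule.span_le]
      rintro z ⟨j, rfl⟩
      exact hall j
    exact eq_top_iff.mpr (hperf ▸ hle)
end

section
/- Let A be a finite-dimensional perfect evolution algebra over a field K and let B and B' be natural bases of A. If for every element e of B the smallest ideal of A containing e equals A, then for every element e' of B' the smallest ideal of A containing e' also equals A. (For a perfect evolution algebra, being basic simple does not depend on the natural basis.) -/
open Submodule

section AuxLemmas

variable {K A : Type*} [Field K] [NonUnitalNonAssocCommRing A] [Module K A]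
  [SMulCommClass K A A] [IsScalarTower K A A]

/-- In an evolution algebra, multiplying any element by a natural-basis vector picks out the
coefficient of that vector times its square. -/
lemma mul_naturalBasis {ι : Type*} {b : Module.Basis ι K A} (hb : IsNaturalBasis b) (a : A) (j : ι) :
    a * b j = b.repr a j • (b j * b j) := by
  conv_lhs => rw [← b.linearCombination_repr a, Finsupp.linearCombination_apply, Finsupp.sum]
  rw [Finset.sum_mul, Finset.sum_eq_single j]
  · rw [smul_mul_assoc]
  · intro i _ hij
    rw [smul_mul_assoc, hb i j hij, smul_zero]
  · intro hj
    rw [Finsupp.notMem_support_iff.1 hj, zero_smul, zero_mul]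

lemma isEvoIdeal_idealGenerated (x : A) : IsEvoIdeal (idealGenerated K x) := by
  intro a y hy
  rw [idealGenerated, Submodule.mem_sInf] at hy ⊢
  intro J hJ
  exact hJ.1 a y (hy J hJ)

lemma mem_idealGenerated (x : A) : x ∈ idealGenerated K x :=
  Submodule.mem_sInf.2 fun _ hJ => hJ.2

lemma idealGenerated_le {x : A} {J : Submodule K A} (hJ : IsEvoIdeal J) (hx : x ∈ J) :
    idealGenerated K x ≤ J :=
  sInf_le ⟨hJ, hx⟩

end AuxLemmas

/-- For a finite-dimensional perfect evolution algebra, being basic simple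
does not depend on the chosen natural basis. -/
theorem basicSimple_independent_of_basis
    {K A ι ι' : Type*} [Field K] [NonUnitalNonAssocCommRing A] [Module K A]
    [SMulCommClass K A A] [IsScalarTower K A A] [FiniteDimensional K A]
    (hperf : IsPerfectEvo K A)
    (b : Module.Basis ι K A) (hb : IsNaturalBasis b)
    (b' : Module.Basis ι' K A) (hb' : IsNaturalBasis b')
    (h : ∀ i : ι, idealGenerated K (b i) = ⊤) :
    ∀ i' : ι', idealGenerated K (b' i') = ⊤ := by
  intro i'
  set I : Submodule K A := idealGenerated K (b' i') with hIdef
  have hI : IsEvoIdeal I := isEvoIdeal_idealGenerated _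
  have hmem : b' i' ∈ I := mem_idealGenerated _
  have hx0 : b' i' ≠ 0 := b'.ne_zero i'
  -- find j with (b j)² ∈ I
  have hr0 : b.repr (b' i') ≠ 0 := by
    intro hc
    exact hx0 (by simpa [hc] using (b.repr.injective (a₁ := b' i') (a₂ := 0) (by simp [hc])))
  obtain ⟨j, hj⟩ : ∃ j, b.repr (b' i') j ≠ 0 := by
    by_contra hc
    push_neg at hc
    exact hr0 (Finsupp.ext fun i => hc i)
  have hbx : b j * b' i' = b.repr (b' i') j • (b j * b j) := by
    rw [mul_comm]; exact mul_naturalBasis hb (b' i') j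
  have hsq : b j * b j ∈ I := by
    have h1 : b j * b' i' ∈ I := hI (b j) _ hmem
    have h2 : (b.repr (b' i') j)⁻¹ • (b j * b' i') ∈ I := I.smul_mem _ h1
    rwa [hbx, smul_smul, inv_mul_cancel₀ hj, one_smul] at h2
  -- span {b j} ⊔ I is an ideal
  have hJideal : IsEvoIdeal (span K {b j} ⊔ I) := by
    intro a y hy
    rcases Submodule.mem_sup.1 hy with ⟨u, hu, v, hv, rfl⟩
    rcases Submodule.mem_span_singleton.1 hu with ⟨c, rfl⟩
    have h1 : a * (c • b j) ∈ I := by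
      rw [mul_smul_comm, mul_naturalBasis hb a j]
      exact I.smul_mem _ (I.smul_mem _ hsq)
    have h2 : a * v ∈ I := hI a v hv
    rw [mul_add]
    exact Submodule.mem_sup_right (I.add_mem h1 h2)
  have htop : span K {b j} ⊔ I = ⊤ := by
    refine top_unique ?_
    rw [← h j]
    exact idealGenerated_le hJideal
      (Submodule.mem_sup_left (Submodule.mem_span_singleton_self _))
  -- perfectness: every product lies in I, hence ⊤ ≤ I
  refine top_unique ?_
  rw [← hperf]
  refine Submodule.span_le.2 ?_
  rintro z ⟨x, y, rfl⟩
  have hx : x ∈ span K {b j} ⊔ I := htop ▸ Submodule.mem_top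
  have hy : y ∈ span K {b j} ⊔ I := htop ▸ Submodule.mem_top
  rcases Submodule.mem_sup.1 hx with ⟨u, hu, v, hv, rfl⟩
  rcases Submodule.mem_sup.1 hy with ⟨u', hu', v', hv', rfl⟩
  rcases Submodule.mem_span_singleton.1 hu with ⟨c, rfl⟩
  rcases Submodule.mem_span_singleton.1 hu' with ⟨d, rfl⟩
  have t1 : (c • b j) * (d • b j) ∈ I := by
    rw [smul_mul_assoc, mul_smul_comm]
    exact I.smul_mem _ (I.smul_mem _ hsq)
  have t2 : (c • b j) * v' ∈ I := by
    rw [smul_mul_assoc]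
    exact I.smul_mem _ (mul_comm (b j) v' ▸ hI (b j) v' hv')
  have t3 : v * (d • b j) ∈ I := by
    rw [mul_smul_comm, mul_comm]
    exact I.smul_mem _ (hI (b j) v hv)
  have t4 : v * v' ∈ I := mul_comm v v' ▸ hI v' v hv
  have : (c • b j + v) * (d • b j + v') ∈ I := by
    rw [add_mul, mul_add, mul_add]
    exact I.add_mem (I.add_mem t1 t2) (I.add_mem t3 t4)
  exact this
end

section
/- Let A be an n-dimensional perfect evolution algebra over a field K with n ≥ 2, let B = (e_1, …, e_n) be a natural basis, and let i satisfy i = 1, i = n−1, or (n even and i = n/2). Suppose I := span{e_1, …, e_i} is an ideal of A and no proper ideal of A spanned by a subset of B has dimension greater than i (so I is a maximal i-basic ideal). Then in the quotient algebra A/I: the images of e_{i+1}, …, e_n form a natural basis of A/I; A/I is perfect; and A/I is basic simple, i.e., for every natural basis C of A/I and every c ∈ C, the smallest ideal of A/I containing c is A/I. -/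
open Submodule

section WrtDefs

variable (K : Type*) {M : Type*} [Field K] [AddCommGroup M] [Module K M]

/-- An ideal with respect to an explicitly given multiplication on the module `M`. -/
def IsIdealWrt (mul : M → M → M) (I : Submodule K M) : Prop :=
  ∀ a : M, ∀ x ∈ I, mul a x ∈ I

/-- A natural basis with respect to an explicitly given multiplication on `M`. -/
def IsNaturalBasisWrt {ι : Type*} (mul : M → M → M) (b : Module.Basis ι K M) : Prop :=
  ∀ i j : ι, i ≠ j → mul (b i) (b j) = 0

/-- The span of all products with respect to an explicitly given multiplication on `M`. -/
def mulSpanWrt (mul : M → M → M) : Submodule K M :=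
  Submodule.span K {z : M | ∃ x y : M, z = mul x y}

/-- The smallest ideal containing `x`, with respect to an explicitly given multiplication. -/
def idealGenWrt (mul : M → M → M) (x : M) : Submodule K M :=
  sInf {I : Submodule K M | IsIdealWrt K mul I ∧ x ∈ I}

end WrtDefs

/-- The multiplication induced on the quotient of a commutative (nonassociative) algebra
by an ideal: this makes `A ⧸ I` the quotient algebra. -/
noncomputable def quotMul {K A : Type*} [Field K] [NonUnitalNonAssocCommRing A]
    [Module K A] [SMulCommClass K A A] [IsScalarTower K A A]
    (I : Submodule K A) (hI : IsEvoIdeal I) :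
    (A ⧸ I) →ₗ[K] (A ⧸ I) →ₗ[K] (A ⧸ I) := by
  have hker1 : I ≤ LinearMap.ker (((LinearMap.mul K A).compr₂ I.mkQ).flip) := by
    intro y hy
    rw [LinearMap.mem_ker]
    ext x
    simp only [LinearMap.flip_apply, LinearMap.compr₂_apply, LinearMap.mul_apply',
      Submodule.mkQ_apply, LinearMap.zero_apply]
    rw [Submodule.Quotient.mk_eq_zero]
    exact hI x y hy
  refine Submodule.liftQ I ((Submodule.liftQ I _ hker1).flip) ?_
  intro x hx
  rw [LinearMap.mem_ker]
  apply LinearMap.ext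
  intro q
  obtain ⟨y, rfl⟩ := Submodule.Quotient.mk_surjective I q
  simp only [LinearMap.flip_apply, LinearMap.zero_apply, Submodule.liftQ_apply,
    LinearMap.compr₂_apply, LinearMap.mul_apply', Submodule.mkQ_apply]
  rw [Submodule.Quotient.mk_eq_zero, mul_comm]
  exact hI y x hx

theorem quotMul_mk' {K A : Type*} [Field K] [NonUnitalNonAssocCommRing A]
    [Module K A] [SMulCommClass K A A] [IsScalarTower K A A]
    (I : Submodule K A) (hI : IsEvoIdeal I) (x y : A) :
    quotMul I hI (Submodule.Quotient.mk x) (Submodule.Quotient.mk y)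
      = Submodule.Quotient.mk (x * y) := by
  simp [quotMul]

/-- Let `A` be an `n`-dimensional perfect evolution algebra (`n ≥ 2`) with
natural basis `e_1, …, e_n`, and let `I = span {e_1, …, e_i}` be a maximal `i`-basic ideal
where `i = 1`, `i = n - 1`, or `n` is even and `i = n/2`. Then the images of
`e_{i+1}, …, e_n` form a natural basis of the quotient algebra `A ⧸ I`, the quotient
algebra is perfect, and it is basic simple. -/
theorem quotient_by_maximal_basic_ideal
    {K A : Type*} [Field K] [NonUnitalNonAssocCommRing A] [Module K A]
    [SMulCommClass K A A] [IsScalarTower K A A]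
    {n : ℕ} (hn : 2 ≤ n) (b : Module.Basis (Fin n) K A) (hb : IsNaturalBasis b)
    (hperf : IsPerfectEvo K A)
    (i : ℕ) (hi : i = 1 ∨ i = n - 1 ∨ (Even n ∧ i = n / 2))
    (I : Submodule K A)
    (hIdef : I = Submodule.span K (⇑b '' {j : Fin n | (j : ℕ) < i}))
    (hIideal : IsEvoIdeal I)
    (hImax : ∀ (J : Submodule K A) (t : Set (Fin n)),
      IsEvoIdeal J → J ≠ ⊤ → J = Submodule.span K (⇑b '' t) →
        Module.finrank K ↥J ≤ i) :
    (∃ c : Module.Basis (Fin (n - i)) K (A ⧸ I),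
        (∀ j : Fin (n - i), c j = I.mkQ (b ⟨i + (j : ℕ), by have := j.isLt; omega⟩)) ∧
          IsNaturalBasisWrt K (fun p q => quotMul I hIideal p q) c) ∧
      mulSpanWrt K (fun p q => quotMul I hIideal p q) = ⊤ ∧
      ∀ (ι : Type*) (c : Module.Basis ι K (A ⧸ I)),
        IsNaturalBasisWrt K (fun p q => quotMul I hIideal p q) c →
          ∀ j : ι, idealGenWrt K (fun p q => quotMul I hIideal p q) (c j) = ⊤ := by
  have hfinA : Module.Finite K A := Module.Finite.of_basis b
  have hi' : i < n := by rcases hi with h | h | ⟨-, h⟩ <;> omega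
  set e : Fin (n - i) → Fin n := fun j => ⟨i + j, by have := j.isLt; omega⟩ with he
  have he_inj : Function.Injective e := by
    intro j j' h
    have := congrArg Fin.val h
    simp only [he] at this
    exact Fin.ext (by omega)
  have hbI : ∀ j : Fin n, (j : ℕ) < i → b j ∈ I := by
    intro j hj
    rw [hIdef]
    exact Submodule.subset_span ⟨j, hj, rfl⟩
  have hrepr0 : ∀ x ∈ I, ∀ j : Fin n, i ≤ (j : ℕ) → b.repr x j = 0 := by
    intro x hx j hj
    rw [hIdef, Module.Basis.mem_span_image] at hx
    by_contra h0
    have : j ∈ (b.repr x).support := Finsupp.mem_support_iff.mpr h0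
    have := hx this
    simp only [Set.mem_setOf_eq] at this
    omega
  set v : Fin (n - i) → A ⧸ I := fun j => Submodule.Quotient.mk (b (e j)) with hv
  have hv_li : LinearIndependent K v := by
    rw [Fintype.linearIndependent_iff]
    intro g hg j
    have hmem : (∑ k, g k • b (e k)) ∈ I := by
      rw [← Submodule.Quotient.mk_eq_zero, ← hg]
      rw [show (Submodule.Quotient.mk (∑ k, g k • b (e k)) : A ⧸ I)
            = ∑ k, g k • Submodule.Quotient.mk (b (e k)) by
          rw [← Submodule.mkQ_apply, map_sum]; simp]
    have h0 := hrepr0 _ hmem (e j) (by simp [he])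
    have h2 : (b.repr (∑ k, g k • b (e k))) (e j) = g j := by
      rw [map_sum]
      rw [Finsupp.finset_sum_apply]
      rw [Finset.sum_eq_single j]
      · simp
      · intro l _ hlj
        simp [Finsupp.single_apply, he_inj.eq_iff, hlj]
      · simp
    rw [h2] at h0
    exact h0
  have hv_span : ⊤ ≤ Submodule.span K (Set.range v) := by
    rintro x -
    obtain ⟨y, rfl⟩ := Submodule.Quotient.mk_surjective I x
    have hy : (Submodule.Quotient.mk y : A ⧸ I)
        = ∑ j, b.repr y j • (Submodule.Quotient.mk (b j) : A ⧸ I) := by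
      conv_lhs => rw [← Module.Basis.sum_repr b y]
      rw [← Submodule.mkQ_apply, map_sum]; simp
    rw [hy]
    apply Submodule.sum_mem
    intro j _
    apply Submodule.smul_mem
    by_cases hj : (j : ℕ) < i
    · rw [(Submodule.Quotient.mk_eq_zero I).mpr (hbI j hj)]
      exact Submodule.zero_mem _
    · have hj' : i ≤ (j : ℕ) := le_of_not_gt hj
      have hje : e ⟨(j : ℕ) - i, by have := j.isLt; omega⟩ = j := by
        apply Fin.ext; simp [he]; omega
      have : (Submodule.Quotient.mk (b j) : A ⧸ I) = v ⟨(j : ℕ) - i, by have := j.isLt; omega⟩ := by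
        rw [hv]; simp only []; rw [hje]
      rw [this]
      exact Submodule.subset_span ⟨_, rfl⟩
  set c : Module.Basis (Fin (n - i)) K (A ⧸ I) := Module.Basis.mk hv_li hv_span with hcdef
  have hc : ∀ k, c k = v k := fun k => Module.Basis.mk_apply hv_li hv_span k
  have hcnat : ∀ k l, k ≠ l → quotMul I hIideal (c k) (c l) = 0 := by
    intro k l hkl
    rw [hc, hc, hv]
    simp only []
    rw [quotMul_mk', hb (e k) (e l) (fun h => hkl (he_inj h))]
    exact Submodule.Quotient.mk_zero I
  set sq : Fin (n - i) → A ⧸ I := fun k => quotMul I hIideal (c k) (c k) with hsqdef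
  -- coordinate formula
  have hqm_coord : ∀ (y : A ⧸ I) (k : Fin (n - i)),
      quotMul I hIideal (c k) y = c.repr y k • sq k := by
    intro y k
    conv_lhs => rw [← Module.Basis.sum_repr c y]
    rw [map_sum, Finset.sum_eq_single k]
    · rw [map_smul]
    · intro l _ hlk
      rw [map_smul, hcnat k l (Ne.symm hlk), smul_zero]
    · simp
  have hqm_comm : ∀ x y : A ⧸ I, quotMul I hIideal x y = quotMul I hIideal y x := by
    intro x y
    obtain ⟨a, rfl⟩ := Submodule.Quotient.mk_surjective I x
    obtain ⟨d, rfl⟩ := Submodule.Quotient.mk_surjective I y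
    rw [quotMul_mk', quotMul_mk', mul_comm]
  -- the span of the squares is everything (perfectness of the quotient)
  have hexp : ∀ x y : A ⧸ I,
      quotMul I hIideal x y ∈ Submodule.span K (Set.range sq) := by
    intro x y
    rw [← Module.Basis.sum_repr c x]
    rw [map_sum, LinearMap.coe_sum, Finset.sum_apply]
    apply Submodule.sum_mem
    intro k _
    rw [map_smul, LinearMap.smul_apply]
    apply Submodule.smul_mem
    rw [hqm_coord]
    exact Submodule.smul_mem _ _ (Submodule.subset_span ⟨k, rfl⟩)
  have hsq_top : Submodule.span K (Set.range sq) = ⊤ := by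
    rw [eq_top_iff]
    rintro q -
    obtain ⟨a, rfl⟩ := Submodule.Quotient.mk_surjective I q
    have ha : a ∈ sqSpan K A := by rw [hperf]; trivial
    rw [sqSpan] at ha
    induction ha using Submodule.span_induction with
    | mem w hw =>
        obtain ⟨x, y, rfl⟩ := hw
        rw [← quotMul_mk']
        exact hexp _ _
    | zero => rw [Submodule.Quotient.mk_zero]; exact Submodule.zero_mem _
    | add x y _ _ hx hy =>
        rw [← Submodule.mkQ_apply, map_add]
        exact Submodule.add_mem _ hx hy
    | smul r x _ hx =>
        rw [← Submodule.mkQ_apply, map_smul]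
        exact Submodule.smul_mem _ _ hx
  have hmul_top : mulSpanWrt K (fun p q => quotMul I hIideal p q) = ⊤ := by
    rw [eq_top_iff, ← hsq_top]
    apply Submodule.span_le.mpr
    rintro x ⟨k, rfl⟩
    simp only [mulSpanWrt]
    exact Submodule.subset_span ⟨c k, c k, rfl⟩
  -- the key simplicity fact
  have key : ∀ J : Submodule K (A ⧸ I),
      IsIdealWrt K (fun p q => quotMul I hIideal p q) J →
        (∃ z : A ⧸ I, z ≠ 0 ∧ z ∈ J) → J = ⊤ := by
    intro J hJ ⟨z, hz0, hzJ⟩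
    have L1 : ∀ y ∈ J, ∀ k, c.repr y k ≠ 0 → sq k ∈ J := by
      intro y hy k hk
      have h1 : quotMul I hIideal (c k) y ∈ J := hJ (c k) y hy
      rw [hqm_coord] at h1
      exact (J.smul_mem_iff hk).mp h1
    have hSne : ∃ k, sq k ∈ J := by
      have : ∃ k, c.repr z k ≠ 0 := by
        by_contra hcon
        push_neg at hcon
        apply hz0
        rw [← Module.Basis.sum_repr c z]
        simp [hcon]
      obtain ⟨k, hk⟩ := this
      exact ⟨k, L1 z hzJ k hk⟩
    obtain ⟨k1, hk1⟩ := hSne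
    have hSuniv : ∀ k, sq k ∈ J := by
      by_contra hcon
      push_neg at hcon
      obtain ⟨k0, hk0⟩ := hcon
      set S : Set (Fin (n - i)) := {k | sq k ∈ J} with hS
      set W : Submodule K (A ⧸ I) := Submodule.span K (⇑c '' S) with hW
      have hWne : c k0 ∉ W := c.linearIndependent.notMem_span_image hk0
      have hsqW : ∀ l ∈ S, sq l ∈ W := by
        intro l hl
        rw [← Module.Basis.sum_repr c (sq l)]
        apply Submodule.sum_mem
        intro k _
        by_cases hk : c.repr (sq l) k = 0
        · rw [hk, zero_smul]; exact Submodule.zero_mem _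
        · exact Submodule.smul_mem _ _
            (Submodule.subset_span ⟨k, L1 (sq l) hl k hk, rfl⟩)
      have hWideal : ∀ (a : A ⧸ I), ∀ x ∈ W, quotMul I hIideal a x ∈ W := by
        intro a x hx
        induction hx using Submodule.span_induction with
        | mem w hw =>
            obtain ⟨l, hl, rfl⟩ := hw
            rw [hqm_comm, hqm_coord]
            exact Submodule.smul_mem _ _ (hsqW l hl)
        | zero => rw [map_zero]; exact Submodule.zero_mem _
        | add x y _ _ hx hy => rw [map_add]; exact Submodule.add_mem _ hx hy
        | smul r x _ hx => rw [map_smul]; exact Submodule.smul_mem _ _ hx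
      have hWmap : W = Submodule.map I.mkQ (Submodule.span K (⇑b '' (e '' S))) := by
        rw [Submodule.map_span, Set.image_image, Set.image_image, hW]
        congr 1
        refine Set.image_congr fun k _ => ?_
        rw [hc, hv]
        simp
      set P : Submodule K A := Submodule.comap I.mkQ W with hP
      have hPeq : P = Submodule.span K (⇑b '' ({j : Fin n | (j : ℕ) < i} ∪ e '' S)) := by
        rw [hP, hWmap, Submodule.comap_map_eq, Submodule.ker_mkQ, Set.image_union,
          Submodule.span_union, ← hIdef, sup_comm]
      have hPideal : IsEvoIdeal P := by
        intro a x hx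
        rw [hP, Submodule.mem_comap] at hx ⊢
        rw [Submodule.mkQ_apply, ← quotMul_mk']
        exact hWideal _ _ hx
      have hPne : P ≠ ⊤ := by
        intro htop
        apply hWne
        have hmem : b (e k0) ∈ P := by rw [htop]; trivial
        rw [hP, Submodule.mem_comap] at hmem
        have : I.mkQ (b (e k0)) = c k0 := by rw [hc, hv]; simp
        rwa [this] at hmem
      have hup : Module.finrank K ↥P ≤ i := hImax P _ hPideal hPne hPeq
      -- lower bound : P contains i + 1 linearly independent vectors
      set g : Fin (i + 1) → Fin n := fun l =>
        if h : (l : ℕ) < i then ⟨l, by omega⟩ else e k1 with hg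
      have hgval : ∀ l : Fin (i + 1),
          ((g l : Fin n) : ℕ) = if (l : ℕ) < i then (l : ℕ) else i + (k1 : ℕ) := by
        intro l
        by_cases h : (l : ℕ) < i <;> simp [hg, h, he]
      have hginj : Function.Injective g := by
        intro l l' hll
        have h2 := congrArg Fin.val hll
        rw [hgval l, hgval l'] at h2
        have := l.isLt
        have := l'.isLt
        apply Fin.ext
        split_ifs at h2 <;> omega
      have hmem_g : ∀ l, b (g l) ∈ P := by
        intro l
        rw [hP, Submodule.mem_comap]
        by_cases hl : (l : ℕ) < i
        · have hbl : b (g l) ∈ I := by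
            apply hbI
            rw [hgval l, if_pos hl]; exact lt_of_eq_of_lt rfl (by omega)
          rw [Submodule.mkQ_apply, (Submodule.Quotient.mk_eq_zero I).mpr hbl]
          exact Submodule.zero_mem _
        · have hgl : g l = e k1 := by rw [hg]; simp [hl]
          rw [hgl]
          have hck : I.mkQ (b (e k1)) = c k1 := by rw [hc, hv]; simp
          rw [hck]
          exact Submodule.subset_span ⟨k1, hk1, rfl⟩
      have hli : LinearIndependent K (fun l : Fin (i + 1) => (⟨b (g l), hmem_g l⟩ : P)) := by
        apply LinearIndependent.of_comp P.subtype
        exact b.linearIndependent.comp g hginj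
      have hcard := hli.fintype_card_le_finrank
      rw [Fintype.card_fin] at hcard
      omega
    rw [eq_top_iff, ← hsq_top]
    apply Submodule.span_le.mpr
    rintro x ⟨k, rfl⟩
    exact hSuniv k
  refine ⟨⟨c, ?_, ?_⟩, hmul_top, ?_⟩
  · intro j
    rw [hc, hv]
    simp only [Submodule.mkQ_apply]
    rfl
  · intro k l hkl
    exact hcnat k l hkl
  · intro ι c' hc' j0
    rw [idealGenWrt, eq_top_iff]
    rintro x -
    rw [Submodule.mem_sInf]
    rintro J ⟨hJideal, hJmem⟩
    rw [key J hJideal ⟨c' j0, c'.ne_zero j0, hJmem⟩]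
    trivial
end

section
/- Let K be a field, n a natural number, and M an n×n matrix over K. Let σ be a permutation of {1, …, n} and d_1, …, d_n nonzero scalars in K, and form the monomial matrix P with P_{kj} = d_j if k = σ(j) and P_{kj} = 0 otherwise. Then P is invertible, and the number of pairs (k, j) with (P⁻¹ M P^{(2)})_{kj} = 0 equals the number of pairs (k, j) with M_{kj} = 0, where P^{(2)} is the entrywise square of P. -/
/-- The monomial matrix associated with a permutation `σ` of `{1, …, n}` and scalars
`d_1, …, d_n`: the entry `(k, j)` is `d j` if `k = σ j` and `0` otherwise. -/
def monomialMatrix {K : Type*} [Zero K] {n : ℕ} (σ : Equiv.Perm (Fin n)) (d : Fin n → K) :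
    Matrix (Fin n) (Fin n) K :=
  Matrix.of fun k j => if k = σ j then d j else 0

/-- Explicit inverse of the monomial matrix. -/
def monomialInv {K : Type*} [Field K] {n : ℕ} (σ : Equiv.Perm (Fin n)) (d : Fin n → K) :
    Matrix (Fin n) (Fin n) K :=
  Matrix.of fun k i => if i = σ k then (d k)⁻¹ else 0

lemma monomialInv_mul {K : Type*} [Field K] {n : ℕ} (σ : Equiv.Perm (Fin n)) (d : Fin n → K)
    (hd : ∀ j, d j ≠ 0) : monomialInv σ d * monomialMatrix σ d = 1 := by
  ext k j
  simp only [Matrix.mul_apply, monomialInv, monomialMatrix, Matrix.of_apply, Matrix.one_apply]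
  rw [Finset.sum_eq_single (σ k)]
  · by_cases h : k = j
    · subst h; simp [inv_mul_cancel₀ (hd k)]
    · simp [h, σ.injective.ne h]
  · intro b _ hb
    simp [hb]
  · simp

lemma mul_monomialInv {K : Type*} [Field K] {n : ℕ} (σ : Equiv.Perm (Fin n)) (d : Fin n → K)
    (hd : ∀ j, d j ≠ 0) : monomialMatrix σ d * monomialInv σ d = 1 := by
  ext k j
  simp only [Matrix.mul_apply, monomialInv, monomialMatrix, Matrix.of_apply, Matrix.one_apply]
  rw [Finset.sum_eq_single (σ.symm k)]
  · by_cases h : k = j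
    · subst h; simp [mul_inv_cancel₀ (hd (σ.symm k))]
    · simp [show j ≠ k from fun hh => h hh.symm, h]
  · intro b _ hb
    have : k ≠ σ b := fun h => hb (by rw [h]; simp)
    simp [this]
  · simp

/-- The monomial matrix `P` built from a permutation `σ` and nonzero
scalars `d` is invertible, and the action `M ↦ P⁻¹ * M * P^{(2)}` (where `P^{(2)}` is the
entrywise square of `P`) preserves the number of zero entries. -/
theorem monomial_action_preserves_zero_count
    {K : Type*} [Field K] {n : ℕ} (M : Matrix (Fin n) (Fin n) K)
    (σ : Equiv.Perm (Fin n)) (d : Fin n → K) (hd : ∀ j, d j ≠ 0) :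
    IsUnit (monomialMatrix σ d) ∧
      {p : Fin n × Fin n |
          ((monomialMatrix σ d)⁻¹ * M * (monomialMatrix σ d).map (fun x => x * x))
            p.1 p.2 = 0}.ncard =
        {p : Fin n × Fin n | M p.1 p.2 = 0}.ncard := by
  have hinv : (monomialMatrix σ d)⁻¹ = monomialInv σ d :=
    Matrix.inv_eq_left_inv (monomialInv_mul σ d hd)
  have hunit : IsUnit (monomialMatrix σ d) := by
    apply (Matrix.isUnit_iff_isUnit_det _).mpr (Matrix.isUnit_det_of_right_inverse (B := monomialInv σ d) (mul_monomialInv σ d hd))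
  refine ⟨hunit, ?_⟩
  have hQ : ∀ k j, ((monomialMatrix σ d)⁻¹ * M * (monomialMatrix σ d).map (fun x => x * x))
      k j = (d k)⁻¹ * M (σ k) (σ j) * (d j * d j) := by
    intro k j
    rw [hinv]
    simp only [Matrix.mul_apply, monomialInv, monomialMatrix, Matrix.map_apply, Matrix.of_apply]
    rw [Finset.sum_eq_single (σ j)]
    · rw [Finset.sum_eq_single (σ k)]
      · simp
      · intro b _ hb; simp [hb]
      · simp
    · intro b _ hb
      simp [fun h : b = σ j => hb h]
    · simp
  have hset : {p : Fin n × Fin n |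
      ((monomialMatrix σ d)⁻¹ * M * (monomialMatrix σ d).map (fun x => x * x)) p.1 p.2 = 0}
      = (Equiv.prodCongr σ σ) ⁻¹' {p : Fin n × Fin n | M p.1 p.2 = 0} := by
    ext ⟨k, j⟩
    simp [hQ, hd k, hd j, mul_eq_zero, inv_eq_zero]
  rw [hset, ← Equiv.image_symm_eq_preimage,
    Set.ncard_image_of_injective _ (Equiv.prodCongr σ σ).symm.injective]
end

section
/- Let K be a field, n a natural number, and M an n×n matrix over K. Let σ be a permutation of {1, …, n} and d_1, …, d_n nonzero scalars in K, and form the monomial matrix P with P_{kj} = d_j if k = σ(j) and P_{kj} = 0 otherwise. Then the number of indices k with (P⁻¹ M P^{(2)})_{kk} = 0 equals the number of indices k with M_{kk} = 0, where P^{(2)} is the entrywise square of P (the number of zero entries on the main diagonal is preserved). -/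
lemma monomialMatrix_inv {K : Type*} [Field K] {n : ℕ} (σ : Equiv.Perm (Fin n))
    (d : Fin n → K) (hd : ∀ j, d j ≠ 0) :
    (monomialMatrix σ d)⁻¹ =
      Matrix.of (fun j k : Fin n => if k = σ j then (d j)⁻¹ else 0) := by
  apply Matrix.inv_eq_left_inv
  ext i k
  simp only [Matrix.mul_apply, Matrix.of_apply, monomialMatrix]
  rw [Finset.sum_eq_single (σ i)]
  · simp only [if_pos rfl]
    by_cases h : i = k
    · subst h; simp [inv_mul_cancel₀ (hd i)]
    · have : ¬ (σ i = σ k) := fun hc => h (σ.injective hc)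
      simp [this, Matrix.one_apply, h]
  · intro b _ hb
    simp [hb]
  · simp

/-- The action `M ↦ P⁻¹ * M * P^{(2)}` of a monomial matrix `P` (with
`P^{(2)}` the entrywise square of `P`) preserves the number of zero entries on the main
diagonal. -/
theorem monomial_action_preserves_diagonal_zero_count
    {K : Type*} [Field K] {n : ℕ} (M : Matrix (Fin n) (Fin n) K)
    (σ : Equiv.Perm (Fin n)) (d : Fin n → K) (hd : ∀ j, d j ≠ 0) :
    {k : Fin n |
        ((monomialMatrix σ d)⁻¹ * M * (monomialMatrix σ d).map (fun x => x * x))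
          k k = 0}.ncard =
      {k : Fin n | M k k = 0}.ncard := by
  have hdiag : ∀ k : Fin n,
      ((monomialMatrix σ d)⁻¹ * M * (monomialMatrix σ d).map (fun x => x * x)) k k
        = (d k)⁻¹ * (M (σ k) (σ k) * (d k * d k)) := by
    intro k
    rw [monomialMatrix_inv σ d hd]
    simp only [Matrix.mul_apply, Matrix.map_apply, Matrix.of_apply, monomialMatrix]
    rw [Finset.sum_eq_single (σ k)]
    · rw [if_pos rfl, Finset.sum_eq_single (σ k)]
      · simp; ring
      · intro b _ hb
        simp [hb]
      · simp
    · intro b _ hb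
      simp [hb]
    · simp
  have hset : {k : Fin n |
      ((monomialMatrix σ d)⁻¹ * M * (monomialMatrix σ d).map (fun x => x * x)) k k = 0}
      = ⇑σ.symm '' {k : Fin n | M k k = 0} := by
    ext k
    simp only [Set.mem_setOf_eq, hdiag k]
    constructor
    · intro h
      rcases mul_eq_zero.1 h with h1 | h2
      · exact absurd h1 (inv_ne_zero (hd k))
      rcases mul_eq_zero.1 h2 with h3 | h4
      · exact ⟨σ k, h3, σ.symm_apply_apply k⟩
      · exact absurd h4 (mul_ne_zero (hd k) (hd k))
    · rintro ⟨m, hm, rfl⟩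
      simp only [Equiv.apply_symm_apply]
      rw [hm]
      ring
  rw [hset, Set.ncard_image_of_injective _ σ.symm.injective]
end

section
/- Let A be an n-dimensional perfect evolution algebra over a field K with n ≥ 3 and natural basis B = (e_1, …, e_n). Suppose span{e_1} is an ideal of A and no proper ideal of A spanned by a subset of B has dimension greater than 1 (so span{e_1} is a maximal 1-basic ideal). Then A is irreducible: A cannot be decomposed as the direct sum of two nonzero ideals. -/
open Submodule

/-- If an `n`-dimensional perfect evolution algebra (`n ≥ 3`) has a
maximal `1`-basic ideal `span {e_1}`, then `A` is irreducible. -/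
theorem irreducible_of_maximal_one_basic_ideal
    {K A : Type*} [Field K] [NonUnitalNonAssocCommRing A] [Module K A]
    [SMulCommClass K A A] [IsScalarTower K A A]
    {n : ℕ} (hn : 3 ≤ n) (b : Module.Basis (Fin n) K A) (hb : IsNaturalBasis b)
    (hperf : IsPerfectEvo K A)
    (hI : IsEvoIdeal (Submodule.span K {b ⟨0, by omega⟩}))
    (hmax : ∀ (J : Submodule K A) (t : Set (Fin n)),
      IsEvoIdeal J → J ≠ ⊤ → J = Submodule.span K (⇑b '' t) →
        Module.finrank K ↥J ≤ 1) :
    IsIrreducibleEvo K A := by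
  classical
  rintro ⟨I, J, hIid, hJid, hIne, hJne, hinf, hsup⟩
  haveI : Module.Finite K A := Module.Finite.of_basis b
  -- expansion of products along the natural basis
  have key : ∀ x y : A, x * y = ∑ k, (b.repr x k * b.repr y k) • (b k * b k) := by
    intro x y
    conv_lhs => rw [← b.sum_repr x, ← b.sum_repr y]
    rw [Finset.sum_mul_sum]
    refine Finset.sum_congr rfl fun i _ => ?_
    rw [Finset.sum_eq_single i]
    · rw [smul_mul_smul_comm]
    · intro j _ hj
      rw [smul_mul_assoc, mul_smul_comm, hb i j (fun h => hj h.symm), smul_zero, smul_zero]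
    · intro h; exact absurd (Finset.mem_univ i) h
  -- the squares of the basis vectors span A
  have hspan : ⊤ ≤ Submodule.span K (Set.range fun k => b k * b k) := by
    rw [← hperf]
    rw [sqSpan, Submodule.span_le]
    rintro z ⟨x, y, rfl⟩
    rw [key x y]
    exact Submodule.sum_mem _ fun k _ => Submodule.smul_mem _ _
      (Submodule.subset_span ⟨k, rfl⟩)
  -- hence they are linearly independent
  have li : LinearIndependent K (fun k => b k * b k) :=
    linearIndependent_of_top_le_span_of_card_eq_finrank hspan
      (by rw [Module.finrank_eq_card_basis b])
  -- decompose each basis vector along I ⊕ J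
  have hdec : ∀ i : Fin n, ∃ y ∈ I, ∃ z ∈ J, y + z = b i := by
    intro i
    have : b i ∈ I ⊔ J := by rw [hsup]; trivial
    exact Submodule.mem_sup.mp this
  choose u hu v hv huv using hdec
  -- each basis vector lies in I or in J
  have hIJ : ∀ i : Fin n, b i ∈ I ∨ b i ∈ J := by
    intro i
    have h0 : u i * v i = 0 := by
      have h1 : u i * v i ∈ I := by rw [mul_comm]; exact hIid (v i) (u i) (hu i)
      have h2 : u i * v i ∈ J := hJid (u i) (v i) (hv i)
      have : u i * v i ∈ I ⊓ J := ⟨h1, h2⟩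
      rw [hinf] at this; exact this
    have hz : ∀ k, b.repr (u i) k * b.repr (v i) k = 0 := by
      have := (key (u i) (v i)).symm.trans h0
      exact Fintype.linearIndependent_iff.mp li _ this
    have hsumr : ∀ k, b.repr (u i) k + b.repr (v i) k = if i = k then 1 else 0 := by
      intro k
      have : b.repr (u i + v i) k = b.repr (b i) k := by rw [huv]
      rwa [map_add, Finsupp.add_apply, b.repr_self, Finsupp.single_apply] at this
    have hoff : ∀ k, k ≠ i → b.repr (u i) k = 0 ∧ b.repr (v i) k = 0 := by
      intro k hk
      have hs := hsumr k
      rw [if_neg (fun h => hk h.symm)] at hs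
      have hvk : b.repr (v i) k = -b.repr (u i) k := by linear_combination hs
      have := hz k
      rw [hvk, mul_neg, neg_eq_zero, mul_self_eq_zero] at this
      exact ⟨this, by rw [hvk, this, neg_zero]⟩
    rcases mul_eq_zero.mp (hz i) with h | h
    · -- u i = 0, so b i = v i ∈ J
      right
      have hu0 : u i = 0 := by
        rw [← b.sum_repr (u i)]
        refine Finset.sum_eq_zero fun k _ => ?_
        rcases eq_or_ne k i with rfl | hk
        · rw [h, zero_smul]
        · rw [(hoff k hk).1, zero_smul]
      rw [← huv, hu0, zero_add]; exact hv i
    · -- v i = 0, so b i = u i ∈ I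
      left
      have hv0 : v i = 0 := by
        rw [← b.sum_repr (v i)]
        refine Finset.sum_eq_zero fun k _ => ?_
        rcases eq_or_ne k i with rfl | hk
        · rw [h, zero_smul]
        · rw [(hoff k hk).2, zero_smul]
      rw [← huv, hv0, add_zero]; exact hu i
  -- I and J are spanned by subsets of the basis
  have hbasic : ∀ (P Q : Submodule K A), IsEvoIdeal P → P ⊓ Q = ⊥ →
      (∀ i : Fin n, b i ∈ P ∨ b i ∈ Q) →
      P = Submodule.span K (⇑b '' {i | b i ∈ P}) := by
    intro P Q _ hPQ hall
    apply le_antisymm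
    · intro x hx
      have hx' : x = (∑ k ∈ Finset.univ.filter (fun k => b k ∈ P), b.repr x k • b k)
          + ∑ k ∈ Finset.univ.filter (fun k => ¬ (b k ∈ P)), b.repr x k • b k := by
        rw [Finset.sum_filter_add_sum_filter_not, b.sum_repr]
      set s1 := ∑ k ∈ Finset.univ.filter (fun k => b k ∈ P), b.repr x k • b k with hs1
      set s2 := ∑ k ∈ Finset.univ.filter (fun k => ¬ (b k ∈ P)), b.repr x k • b k with hs2
      have hs1P : s1 ∈ P := Submodule.sum_mem _ fun k hk =>
        Submodule.smul_mem _ _ (Finset.mem_filter.mp hk).2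
      have hs2Q : s2 ∈ Q := Submodule.sum_mem _ fun k hk => by
        have := (Finset.mem_filter.mp hk).2
        exact Submodule.smul_mem _ _ ((hall k).resolve_left this)
      have hs2P : s2 ∈ P := by
        have : s2 = x - s1 := by rw [hx']; abel
        rw [this]; exact Submodule.sub_mem _ hx hs1P
      have hs20 : s2 = 0 := by
        have : s2 ∈ P ⊓ Q := ⟨hs2P, hs2Q⟩
        rw [hPQ] at this; exact this
      rw [hx', hs20, add_zero]
      exact Submodule.sum_mem _ fun k hk => Submodule.smul_mem _ _
        (Submodule.subset_span ⟨k, (Finset.mem_filter.mp hk).2, rfl⟩)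
    · rw [Submodule.span_le]
      rintro z ⟨i, hi, rfl⟩
      exact hi
  -- both are proper
  have hInt : I ≠ ⊤ := by
    intro h
    apply hJne
    rw [← hinf, h, top_inf_eq]
  have hJnt : J ≠ ⊤ := by
    intro h
    apply hIne
    rw [← hinf, h, inf_top_eq]
  have hJI : ∀ i : Fin n, b i ∈ J ∨ b i ∈ I := fun i => (hIJ i).symm
  have hinf' : J ⊓ I = ⊥ := by rw [inf_comm]; exact hinf
  have hdI := hmax I _ hIid hInt (hbasic I J hIid hinf hIJ)
  have hdJ := hmax J _ hJid hJnt (hbasic J I hJid hinf' hJI)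
  -- dimension count
  have hcount := Submodule.finrank_sup_add_finrank_inf_eq I J
  rw [hsup, hinf, finrank_top, finrank_bot, Module.finrank_eq_card_basis b] at hcount
  simp only [Fintype.card_fin, add_zero] at hcount
  omega
end

section
/- Let n be an even natural number with n ≥ 4, and let A be an n-dimensional perfect, irreducible evolution algebra over a field K with natural basis B = (e_1, …, e_n). Suppose I := span{e_1, …, e_{n/2}} is an ideal of A and no proper ideal of A spanned by a subset of B has dimension greater than n/2 (so I is a maximal (n/2)-basic ideal). Then every permutation σ of {1, …, n} for which span{e_{σ(1)}, …, e_{σ(n/2)}} is an ideal of A satisfies σ({1, …, n/2}) = {1, …, n/2} (and consequently σ({n/2+1, …, n}) = {n/2+1, …, n}). -/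
open Submodule

lemma IsEvoIdeal.sup' {K A : Type*} [Field K] [NonUnitalNonAssocCommRing A] [Module K A]
    [SMulCommClass K A A] [IsScalarTower K A A] {I J : Submodule K A}
    (hI : IsEvoIdeal I) (hJ : IsEvoIdeal J) : IsEvoIdeal (I ⊔ J) := by
  intro a x hx
  rw [Submodule.mem_sup] at hx ⊢
  obtain ⟨y, hy, z, hz, rfl⟩ := hx
  exact ⟨a * y, hI a y hy, a * z, hJ a z hz, (mul_add a y z).symm⟩


/-- Let `A` be an `n`-dimensional perfect irreducible evolution algebra
(`n` even, `n ≥ 4`) with a maximal `(n/2)`-basic ideal spanned by the first half of the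
natural basis. Then every permutation `σ` for which the span of `e_{σ 1}, …, e_{σ (n/2)}`
is an ideal maps the lower half of the indices onto itself (and hence the upper half onto
itself). -/
theorem half_dim_basic_ideal_perm_preserves_halves
    {K A : Type*} [Field K] [NonUnitalNonAssocCommRing A] [Module K A]
    [SMulCommClass K A A] [IsScalarTower K A A]
    {n : ℕ} (hn : 4 ≤ n) (hne : Even n)
    (b : Module.Basis (Fin n) K A) (hb : IsNaturalBasis b)
    (hperf : IsPerfectEvo K A) (hirr : IsIrreducibleEvo K A)
    (hI : IsEvoIdeal (Submodule.span K (⇑b '' {j : Fin n | (j : ℕ) < n / 2})))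
    (hmax : ∀ (J : Submodule K A) (t : Set (Fin n)),
      IsEvoIdeal J → J ≠ ⊤ → J = Submodule.span K (⇑b '' t) →
        Module.finrank K ↥J ≤ n / 2) :
    ∀ σ : Equiv.Perm (Fin n),
      IsEvoIdeal (Submodule.span K (⇑b '' (⇑σ '' {j : Fin n | (j : ℕ) < n / 2}))) →
        ⇑σ '' {j : Fin n | (j : ℕ) < n / 2} = {j : Fin n | (j : ℕ) < n / 2} ∧
          ⇑σ '' {j : Fin n | n / 2 ≤ (j : ℕ)} = {j : Fin n | n / 2 ≤ (j : ℕ)} := by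
    classical
  intro σ hJ
  set m := n / 2 with hm
  have hmn : m < n := by omega
  have hm2 : 2 ≤ m := by omega
  set S : Set (Fin n) := {j : Fin n | (j : ℕ) < m} with hSdef
  -- card of S
  have hcardS : S.toFinset.card = m := by
    have : S.toFinset = Finset.Iio (⟨m, hmn⟩ : Fin n) := by
      ext j; simp [hSdef, Fin.lt_def]
    rw [this, Fin.card_Iio]
  have key : σ '' S = S := by
    by_contra hne'
    set T : Set (Fin n) := σ '' S with hTdef
    have hcardT : T.toFinset.card = m := by
      rw [Set.toFinset_image, Finset.card_image_of_injective _ σ.injective, hcardS]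
    -- exists x in T \ S
    have hTS : ¬ T ⊆ S := by
      intro hsub
      exact hne' (Set.eq_of_subset_of_card_le hsub
        (by rw [← Set.toFinset_card, ← Set.toFinset_card, hcardS, hcardT]))
    obtain ⟨x, hxT, hxS⟩ := Set.not_subset.mp hTS
    -- span of union is top
    have hsupIdeal : IsEvoIdeal (span K (⇑b '' S) ⊔ span K (⇑b '' T)) := hI.sup' hJ
    have hspan_union : span K (⇑b '' S) ⊔ span K (⇑b '' T) = span K (⇑b '' (S ∪ T)) := by
      rw [Set.image_union, Submodule.span_union]
    have hcard_union : m < (S ∪ T).toFinset.card := by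
      have hsub : insert x S.toFinset ⊆ (S ∪ T).toFinset := by
        intro y hy
        rw [Finset.mem_insert] at hy
        rcases hy with rfl | hy
        · simp [Set.mem_toFinset]; exact Or.inr hxT
        · rw [Set.mem_toFinset] at hy; simp [Set.mem_toFinset]; exact Or.inl hy
      calc m < (insert x S.toFinset).card := by
              rw [Finset.card_insert_of_notMem (by simpa [Set.mem_toFinset] using hxS), hcardS]
              omega
        _ ≤ _ := Finset.card_le_card hsub
    have hlirest : LinearIndependent K (fun y : ↑(⇑b '' (S ∪ T)) => (y : A)) :=
      LinearIndepOn.id_image (b.linearIndependent.comp _ Subtype.val_injective)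
    have hfr : Module.finrank K ↥(span K (⇑b '' (S ∪ T))) = (S ∪ T).toFinset.card := by
      rw [finrank_span_set_eq_card hlirest, Set.toFinset_image,
        Finset.card_image_of_injective _ b.injective]
    have htop : span K (⇑b '' (S ∪ T)) = ⊤ := by
      by_contra hnt
      have := hmax (span K (⇑b '' (S ∪ T))) (S ∪ T) (hspan_union ▸ hsupIdeal) hnt rfl
      rw [hfr] at this
      omega
    -- union is everything
    have huniv : S ∪ T = Set.univ := by
      by_contra hnu
      obtain ⟨j, hj⟩ := (Set.ne_univ_iff_exists_notMem _).mp hnu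
      exact b.linearIndependent.notMem_span_image hj (htop ▸ Submodule.mem_top)
    -- S and T disjoint
    have hdisj : Disjoint S T := by
      have h1 : (S ∪ T).toFinset.card = n := by
        have : (S ∪ T).toFinset = Finset.univ := by
          ext j
          simp only [Set.mem_toFinset, huniv, Set.mem_univ, Finset.mem_univ]
        rw [this, Finset.card_univ, Fintype.card_fin]
      have h2 := Finset.card_union_add_card_inter S.toFinset T.toFinset
      have h3 : S.toFinset ∪ T.toFinset = (S ∪ T).toFinset := by
        ext j; simp [Set.mem_toFinset]
      rw [h3, h1, hcardS, hcardT] at h2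
      have h4 : S.toFinset ∩ T.toFinset = ∅ := Finset.card_eq_zero.mp (by omega)
      exact Set.disjoint_toFinset.mp (Finset.disjoint_iff_inter_eq_empty.mpr h4)
    refine hirr ⟨span K (⇑b '' S), span K (⇑b '' T), hI, hJ, ?_, ?_, ?_, ?_⟩
    · intro hbot
      have hmem : b ⟨0, by omega⟩ ∈ span K (⇑b '' S) :=
        Submodule.subset_span ⟨_, by simp [hSdef]; omega, rfl⟩
      rw [hbot, Submodule.mem_bot] at hmem
      exact b.ne_zero _ hmem
    · intro hbot
      have hmem : b (σ ⟨0, by omega⟩) ∈ span K (⇑b '' T) :=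
        Submodule.subset_span ⟨_, ⟨_, by simp [hSdef]; omega, rfl⟩, rfl⟩
      rw [hbot, Submodule.mem_bot] at hmem
      exact b.ne_zero _ hmem
    · exact disjoint_iff.mp (b.linearIndependent.disjoint_span_image hdisj)
    · rw [hspan_union, huniv]
      simpa using b.span_eq
  refine ⟨key, ?_⟩
  have hcompl : {j : Fin n | m ≤ (j : ℕ)} = Sᶜ := by
    ext j; simp [hSdef, not_lt]
  rw [hcompl, Set.image_compl_eq σ.bijective, key]
end

section
/- Let A be a 4-dimensional perfect evolution algebra over a field K with natural basis B = (e_1, e_2, e_3, e_4) and structure constants ω, and suppose span{e_1, e_2, e_3} is an ideal of A (so ω_{4j} = 0 for j ≤ 3 and ω_{44} ≠ 0). Then there exists i ∈ {1, 2, 3} such that ω_{ij} = 0 for every j ∈ {1, 2, 3, 4} with j ≠ i, if and only if there exist i ∈ {1, 2, 3} and distinct indices k, l ∈ {1, 2, 3} \ {i} such that span{e_k, e_l} is an ideal of A and span{e_k, e_l, e_4} is an ideal of A. -/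
open Submodule

section AuxLemmas

variable {K A : Type*} [Field K] [NonUnitalNonAssocCommRing A] [Module K A]
  [SMulCommClass K A A] [IsScalarTower K A A]

lemma aux_mul_basis_eq {ι : Type*} [Fintype ι] [DecidableEq ι] (b : Module.Basis ι K A)
    (hb : IsNaturalBasis b) (a : A) (j : ι) :
    a * b j = b.repr a j • (b j * b j) := by
  conv_lhs => rw [← b.sum_repr a]
  rw [Finset.sum_mul, Finset.sum_eq_single j]
  · rw [smul_mul_assoc]
  · intro k _ hk; rw [smul_mul_assoc, hb k j hk, smul_zero]
  · intro h; simp at h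

lemma aux_isEvoIdeal_span_image_iff {ι : Type*} [Fintype ι] [DecidableEq ι]
    (b : Module.Basis ι K A) (hb : IsNaturalBasis b) (S : Set ι) :
    IsEvoIdeal (Submodule.span K (b '' S)) ↔
      ∀ j ∈ S, ∀ m, m ∉ S → b.repr (b j * b j) m = 0 := by
  constructor
  · intro h j hj m hm
    have hx : b j ∈ Submodule.span K (b '' S) := Submodule.subset_span ⟨j, hj, rfl⟩
    have h2 := h (b j) (b j) hx
    rw [Module.Basis.mem_span_image] at h2
    by_contra hne
    exact hm (h2 (Finsupp.mem_support_iff.2 hne))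
  · intro h a x hx
    induction hx using Submodule.span_induction with
    | mem z hz =>
        obtain ⟨j, hj, rfl⟩ := hz
        rw [aux_mul_basis_eq b hb]
        refine Submodule.smul_mem _ _ ?_
        rw [Module.Basis.mem_span_image]
        intro m hm
        by_contra hmS
        exact Finsupp.mem_support_iff.1 hm (h j hj m hmS)
    | zero => simpa using Submodule.zero_mem _
    | add x y _ _ hx' hy' => rw [mul_add]; exact Submodule.add_mem _ hx' hy'
    | smul c x _ hx' => rw [mul_smul_comm]; exact Submodule.smul_mem _ _ hx'

end AuxLemmas

/-- Let `A` be a `4`-dimensional perfect evolution algebra in which the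
first three natural basis vectors span an ideal. Then there is `i ∈ {1, 2, 3}` with
`ω_{ij} = 0` for every `j ≠ i` if and only if there are `i ∈ {1, 2, 3}` and distinct
`k, l ∈ {1, 2, 3} \ {i}` such that `span {e_k, e_l}` and `span {e_k, e_l, e_4}` are ideals
of `A`. -/
theorem three_basic_ideal_exchange_criterion
    {K A : Type*} [Field K] [NonUnitalNonAssocCommRing A] [Module K A]
    [SMulCommClass K A A] [IsScalarTower K A A]
    (b : Module.Basis (Fin 4) K A) (hb : IsNaturalBasis b)
    (hperf : IsPerfectEvo K A)
    (hI : IsEvoIdeal (Submodule.span K {b 0, b 1, b 2})) :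
    (∃ i : Fin 4, i ≠ 3 ∧ ∀ j : Fin 4, j ≠ i → structMatrix b i j = 0) ↔
      ∃ i k l : Fin 4, i ≠ 3 ∧ k ≠ 3 ∧ l ≠ 3 ∧ k ≠ i ∧ l ≠ i ∧ k ≠ l ∧
        IsEvoIdeal (Submodule.span K {b k, b l}) ∧
        IsEvoIdeal (Submodule.span K {b k, b l, b 3}) := by
  have crit2 : ∀ k l : Fin 4, IsEvoIdeal (Submodule.span K {b k, b l}) ↔
      ∀ j ∈ ({k, l} : Set (Fin 4)), ∀ m, m ∉ ({k, l} : Set (Fin 4)) →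
        b.repr (b j * b j) m = 0 := by
    intro k l
    have : ({b k, b l} : Set A) = b '' {k, l} := by simp [Set.image_insert_eq]
    rw [this, aux_isEvoIdeal_span_image_iff b hb]
  have crit3 : ∀ k l m : Fin 4, IsEvoIdeal (Submodule.span K {b k, b l, b m}) ↔
      ∀ j ∈ ({k, l, m} : Set (Fin 4)), ∀ p, p ∉ ({k, l, m} : Set (Fin 4)) →
        b.repr (b j * b j) p = 0 := by
    intro k l m
    have : ({b k, b l, b m} : Set A) = b '' {k, l, m} := by simp [Set.image_insert_eq]
    rw [this, aux_isEvoIdeal_span_image_iff b hb]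
  have hI' := (crit3 0 1 2).mp hI
  constructor
  · rintro ⟨i, hi3, hrow⟩
    have hrow' : ∀ j : Fin 4, j ≠ i → b.repr (b j * b j) i = 0 := hrow
    fin_cases i
    · refine ⟨0, 1, 2, by decide, by decide, by decide, by decide, by decide, by decide, ?_, ?_⟩
      · rw [crit2]
        intro j hj m hm
        simp only [Set.mem_insert_iff, Set.mem_singleton_iff] at hj hm
        push_neg at hm
        have hm' : m = 0 ∨ m = 3 := by omega
        rcases hj with rfl | rfl <;> rcases hm' with rfl | rfl
        exacts [hrow' 1 (by decide), hI' 1 (by simp) 3 (by simp),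
          hrow' 2 (by decide), hI' 2 (by simp) 3 (by simp)]
      · rw [crit3]
        intro j hj m hm
        simp only [Set.mem_insert_iff, Set.mem_singleton_iff] at hj hm
        push_neg at hm
        have hm' : m = 0 := by omega
        subst hm'
        rcases hj with rfl | rfl | rfl
        exacts [hrow' 1 (by decide), hrow' 2 (by decide), hrow' 3 (by decide)]
    · refine ⟨1, 0, 2, by decide, by decide, by decide, by decide, by decide, by decide, ?_, ?_⟩
      · rw [crit2]
        intro j hj m hm
        simp only [Set.mem_insert_iff, Set.mem_singleton_iff] at hj hm
        push_neg at hm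
        have hm' : m = 1 ∨ m = 3 := by omega
        rcases hj with rfl | rfl <;> rcases hm' with rfl | rfl
        exacts [hrow' 0 (by decide), hI' 0 (by simp) 3 (by simp),
          hrow' 2 (by decide), hI' 2 (by simp) 3 (by simp)]
      · rw [crit3]
        intro j hj m hm
        simp only [Set.mem_insert_iff, Set.mem_singleton_iff] at hj hm
        push_neg at hm
        have hm' : m = 1 := by omega
        subst hm'
        rcases hj with rfl | rfl | rfl
        exacts [hrow' 0 (by decide), hrow' 2 (by decide), hrow' 3 (by decide)]
    · refine ⟨2, 0, 1, by decide, by decide, by decide, by decide, by decide, by decide, ?_, ?_⟩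
      · rw [crit2]
        intro j hj m hm
        simp only [Set.mem_insert_iff, Set.mem_singleton_iff] at hj hm
        push_neg at hm
        have hm' : m = 2 ∨ m = 3 := by omega
        rcases hj with rfl | rfl <;> rcases hm' with rfl | rfl
        exacts [hrow' 0 (by decide), hI' 0 (by simp) 3 (by simp),
          hrow' 1 (by decide), hI' 1 (by simp) 3 (by simp)]
      · rw [crit3]
        intro j hj m hm
        simp only [Set.mem_insert_iff, Set.mem_singleton_iff] at hj hm
        push_neg at hm
        have hm' : m = 2 := by omega
        subst hm'
        rcases hj with rfl | rfl | rfl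
        exacts [hrow' 0 (by decide), hrow' 1 (by decide), hrow' 3 (by decide)]
    · exact absurd rfl hi3
  · rintro ⟨i, k, l, hi3, hk3, hl3, hki, hli, hkl, h2, h3id⟩
    refine ⟨i, hi3, ?_⟩
    intro j hj
    have h' := (crit3 k l 3).mp h3id
    have hjmem : j ∈ ({k, l, (3 : Fin 4)} : Set (Fin 4)) := by
      simp only [Set.mem_insert_iff, Set.mem_singleton_iff]; omega
    have himem : i ∉ ({k, l, (3 : Fin 4)} : Set (Fin 4)) := by
      simp only [Set.mem_insert_iff, Set.mem_singleton_iff]; push_neg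
      exact ⟨fun h => hki h.symm, fun h => hli h.symm, hi3⟩
    exact h' j hjmem i himem
end
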